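/- Let d ∈ [ω]^ω. Define d̃ ∈ [ω]^ω recursively by d̃(0) = d(0) and d̃(k+1) = d(d̃(k)+1)+1. If x ∈ [ω]^ω (identified with its increasing enumeration) omits infinitely many intervals of d̃ (i.e., x ∩ [d̃(k), d̃(k+1)) = ∅ for infinitely many k), then d(n) < x(n) for infinitely many n. -/
import Mathlib


open Set Filter

/-- The increasing enumeration of a set of naturals. -/
noncomputable def enum (s : Set ℕ) : ℕ → ℕ := Nat.nth (· ∈ s)

/-- `d̃`, defined recursively by `d̃(0) = d(0)` and `d̃(k+1) = d(d̃(k)+1)+1`. -/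
def dtil (d : ℕ → ℕ) : ℕ → ℕ
  | 0 => d 0
  | k + 1 => d (dtil d k + 1) + 1

/-- If `x ∈ [ω]^ω` omits infinitely many intervals of `d̃` (that is,
`x ∩ [d̃(k), d̃(k+1)) = ∅` for infinitely many `k`), then `d(n) < x(n)` for
infinitely many `n`. -/
theorem stmt10 (d : Set ℕ) (hd : d.Infinite) (x : Set ℕ) (hx : x.Infinite)
    (homit : {k : ℕ | x ∩ Set.Ico (dtil (enum d) k) (dtil (enum d) (k + 1)) = ∅}.Infinite) :
    {n : ℕ | enum d n < enum x n}.Infinite := by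
  have hdm : StrictMono (enum d) := Nat.nth_strictMono hd
  have hxm : StrictMono (enum x) := Nat.nth_strictMono hx
  have hdt : StrictMono (dtil (enum d)) := by
    apply strictMono_nat_of_lt_succ
    intro k
    calc dtil (enum d) k < dtil (enum d) k + 1 := Nat.lt_succ_self _
    _ ≤ enum d (dtil (enum d) k + 1) := hdm.le_apply
    _ < dtil (enum d) (k + 1) := Nat.lt_succ_self _
  have key : ∀ k ∈ {k : ℕ | x ∩ Set.Ico (dtil (enum d) k) (dtil (enum d) (k + 1)) = ∅},
      dtil (enum d) k + 1 ∈ {n : ℕ | enum d n < enum x n} := by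
    intro k hk
    simp only [Set.mem_setOf_eq] at hk ⊢
    have hmem : enum x (dtil (enum d) k) ∈ x := Nat.nth_mem_of_infinite hx _
    have h1 : dtil (enum d) k ≤ enum x (dtil (enum d) k) := hxm.le_apply
    have h2 : dtil (enum d) (k + 1) ≤ enum x (dtil (enum d) k) := by
      by_contra h
      push_neg at h
      have : enum x (dtil (enum d) k) ∈ x ∩ Set.Ico (dtil (enum d) k) (dtil (enum d) (k + 1)) := ⟨hmem, h1, h⟩
      simp [hk] at this
    calc enum d (dtil (enum d) k + 1) < dtil (enum d) (k + 1) := Nat.lt_succ_self _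
    _ ≤ enum x (dtil (enum d) k) := h2
    _ < enum x (dtil (enum d) k + 1) := hxm (Nat.lt_succ_self _)
  have := Set.Infinite.image (f := fun k => dtil (enum d) k + 1)
    (fun a _ b _ hab => hdt.injective (Nat.succ_injective hab)) homit
  exact this.mono (by rintro _ ⟨k, hk, rfl⟩; exact key k hk)
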